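/- Let μ ∈ (ℂ∖ℤ)^n, let λ ∈ (1/2+ℤ)^n be a dominant so(2n)-weight, fix 2 ≤ k ≤ n, and let T(L) ∈ B(μ,λ) satisfy ℓ'_{k1} = 1/2, ℓ'_{kk} = ℓ_{kk}, ℓ_{ki} = ℓ'_{ki} = ℓ_{k−1,i} for all 2 ≤ i ≤ k−1, and ℓ_{k1} + ℓ_{k−1,1} = 1. Then for every m ∈ [k−1], provided all denominators occurring are nonzero, ∑_{i=1}^{k} D_{ki1m}(L) · B_{ki}(L+δ^{(ki)'}+δ^{(k−1,1)}) = 0. -/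

import Mathlib

open scoped BigOperators Classical

noncomputable section

namespace GTpaper

/-- `a - b ∈ ℤ≥0`, the integer-shift order `a ≥ b` on `ℂ`. -/
def IntGE (a b : ℂ) : Prop := ∃ m : ℕ, a = b + m

/-- `a - b ∈ ℤ>0`, the strict integer-shift order `a > b` on `ℂ`. -/
def IntGT (a b : ℂ) : Prop := ∃ m : ℕ, a = b + m + 1

/-- `a ∈ ℤ` as a subset of `ℂ`. -/
def IsInt (a : ℂ) : Prop := ∃ m : ℤ, a = m

/-- `a ∈ 1/2 + ℤ` as a subset of `ℂ`. -/
def IsHalfInt (a : ℂ) : Prop := ∃ m : ℤ, a = (m : ℂ) + 1 / 2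

/-- A tableau: a doubly indexed family of unprimed entries `u k i` (`ℓ_{ki}`) and primed
entries `p k i` (`ℓ'_{ki}`).  Only positions with `1 ≤ i ≤ k ≤ n` (resp. `2 ≤ i` for the primed
entries of type-`D` tableaux) are relevant; normalization predicates below set the rest to `0`. -/
structure Tab (R : Type*) where
  u : ℕ → ℕ → R
  p : ℕ → ℕ → R

instance : Add (Tab ℤ) :=
  ⟨fun a b => ⟨fun k i => a.u k i + b.u k i, fun k i => a.p k i + b.p k i⟩⟩

instance : Neg (Tab ℤ) := ⟨fun a => ⟨fun k i => -a.u k i, fun k i => -a.p k i⟩⟩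

/-- Add an integer tableau `Z` to a tableau `L`. -/
def Tab.addZ {R : Type*} [Ring R] (L : Tab R) (Z : Tab ℤ) : Tab R :=
  ⟨fun k i => L.u k i + (Z.u k i : R), fun k i => L.p k i + (Z.p k i : R)⟩

/-- `δ^{(k i)}`: the integer tableau with a single `1` at unprimed position `(k,i)`. -/
def deltaU (k i : ℕ) : Tab ℤ :=
  ⟨fun a b => if a = k ∧ b = i then 1 else 0, fun _ _ => 0⟩

/-- `δ^{(k i)'}`: the integer tableau with a single `1` at primed position `(k,i)`. -/
def deltaP (k i : ℕ) : Tab ℤ :=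
  ⟨fun _ _ => 0, fun a b => if a = k ∧ b = i then 1 else 0⟩

section Coeffs

variable {F : Type*} [Field F]

/-- `ω_k(L)`, the `k`-th component of the `C`-weight of a type-`C` tableau. -/
def wt (k : ℕ) (L : Tab F) : F :=
  2 * (∑ i ∈ Finset.Icc 1 k, L.p k i) - (∑ i ∈ Finset.Icc 1 k, L.u k i) -
    (∑ i ∈ Finset.Icc 1 (k - 1), L.u (k - 1) i) + (k : F) - 1 / 2

/-- `A_{ki}(L)`. -/
def coA (k i : ℕ) (L : Tab F) : F :=
  ∏ a ∈ (Finset.Icc 1 k).erase i, (L.p k a - L.p k i)⁻¹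

/-- `B_{ki}(L)`. -/
def coB (k i : ℕ) (L : Tab F) : F :=
  2 * coA k i L * (2 * L.p k i - 1) * (∏ a ∈ Finset.Icc 1 k, (L.u k a - L.p k i)) *
    ∏ a ∈ Finset.Icc 1 (k - 1), (L.u (k - 1) a - L.p k i)

/-- `C_{ki}(L)`. -/
def coC (k i : ℕ) (L : Tab F) : F :=
  (2 * L.u (k - 1) i - 1)⁻¹ *
    ∏ a ∈ (Finset.Icc 1 (k - 1)).erase i,
      ((L.u (k - 1) i - L.u (k - 1) a) * (L.u (k - 1) i + L.u (k - 1) a - 1))⁻¹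

/-- `D_{kijm}(L)`. -/
def coD (k i j m : ℕ) (L : Tab F) : F :=
  coA k i L * coA (k - 1) m L * coC k j L *
    (∏ a ∈ (Finset.Icc 1 k).erase i, (L.u (k - 1) j ^ 2 - L.p k a ^ 2)) *
    ∏ a ∈ (Finset.Icc 1 (k - 1)).erase m, (L.u (k - 1) j ^ 2 - L.p (k - 1) a ^ 2)

end Coeffs

/-- The `C`-weight `ω(T(L)) ∈ ℂ^n` of a type-`C` tableau. -/
def cwtv (n : ℕ) (T : Tab ℂ) : Fin n → ℂ := fun k => wt ((k : ℕ) + 1) T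

/-- A type-`C` tableau is `C`-standard (conditions (7) and (8)). -/
def IsCStandard (n : ℕ) (T : Tab ℂ) : Prop :=
  ∀ k, 1 ≤ k → k ≤ n →
    (IntGE (-(1 / 2)) (T.p k 1) ∧
      (∀ i, 1 ≤ i → i ≤ k → IntGE (T.p k i) (T.u k i)) ∧
      (∀ i, 1 ≤ i → i + 1 ≤ k → IntGT (T.u k i) (T.p k (i + 1))) ∧
      (2 ≤ k →
        (∀ i, 1 ≤ i → i ≤ k - 1 → IntGE (T.p k i) (T.u (k - 1) i)) ∧
        (∀ i, 1 ≤ i → i ≤ k - 1 → IntGT (T.u (k - 1) i) (T.p k (i + 1)))))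

/-- A type-`D` tableau is `D`-standard (conditions (5) and (6)); primed entries `p k 1`
are irrelevant. -/
def IsDStandard (n : ℕ) (T : Tab ℂ) : Prop :=
  ∀ k, 2 ≤ k → k ≤ n →
    (IntGE (-T.p k 2) (T.u k 1) ∧
      (∀ i, 2 ≤ i → i ≤ k → IntGE (T.p k i) (T.u k i)) ∧
      (∀ i, 1 ≤ i → i + 1 ≤ k → IntGT (T.u k i) (T.p k (i + 1))) ∧
      IntGE (-T.p k 2) (T.u (k - 1) 1) ∧
      (∀ i, 2 ≤ i → i ≤ k - 1 → IntGE (T.p k i) (T.u (k - 1) i)) ∧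
      (∀ i, 1 ≤ i → i ≤ k - 1 → IntGT (T.u (k - 1) i) (T.p k (i + 1))))

/-- `C`-regularity of a type-`C` tableau. -/
def IsCRegular (n : ℕ) (T : Tab ℂ) : Prop :=
  (∀ k i a, 1 ≤ i → i ≤ k → 1 ≤ a → a ≤ k → k ≤ n → i ≠ a → T.p k a ≠ T.p k i) ∧
  (∀ k i a, 1 ≤ i → i ≤ k → 1 ≤ a → a ≤ k → k ≤ n - 1 → i ≠ a → T.u k a ≠ T.u k i) ∧
  (∀ k i a, 1 ≤ i → i ≤ k → 1 ≤ a → a ≤ k → k ≤ n - 1 → i ≠ a → T.u k a + T.u k i ≠ 1) ∧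
  (∀ k i, 1 ≤ i → i ≤ k → k ≤ n - 1 → T.u k i ≠ 1 / 2)

/-- `C`-genericity of a type-`C` tableau. -/
def IsCGeneric (n : ℕ) (T : Tab ℂ) : Prop :=
  (∀ k i a, 1 ≤ i → i ≤ k → 1 ≤ a → a ≤ k → k ≤ n → i ≠ a → ¬IsInt (T.p k a - T.p k i)) ∧
  (∀ k i a, 1 ≤ i → i ≤ k → 1 ≤ a → a ≤ k → k ≤ n - 1 → i ≠ a → ¬IsInt (T.u k a - T.u k i)) ∧
  (∀ k i a, 1 ≤ i → i ≤ k → 1 ≤ a → a ≤ k → k ≤ n - 1 → ¬IsInt (T.u k a + T.u k i)) ∧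
  (∀ k i, 1 ≤ i → i ≤ k → k ≤ n - 1 → ¬IsHalfInt (T.u k i))

/-- Normalization of a type-`C` tableau: all entries outside `1 ≤ i ≤ k ≤ n` vanish. -/
def CNorm (n : ℕ) (T : Tab ℂ) : Prop :=
  (∀ k i, ¬(1 ≤ i ∧ i ≤ k ∧ k ≤ n) → T.u k i = 0) ∧
  (∀ k i, ¬(1 ≤ i ∧ i ≤ k ∧ k ≤ n) → T.p k i = 0)

/-- Normalization of a type-`D` tableau: unprimed entries outside `1 ≤ i ≤ k ≤ n` and primed
entries outside `2 ≤ i ≤ k ≤ n` vanish. -/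
def DNorm (n : ℕ) (T : Tab ℂ) : Prop :=
  (∀ k i, ¬(1 ≤ i ∧ i ≤ k ∧ k ≤ n) → T.u k i = 0) ∧
  (∀ k i, ¬(2 ≤ i ∧ i ≤ k ∧ k ≤ n) → T.p k i = 0)

/-- A dominant `so(2n)`-weight. -/
def SODominant {n : ℕ} (lam : Fin n → ℂ) : Prop :=
  (∀ i j : Fin n, (i : ℕ) + 1 = (j : ℕ) → IntGE (lam i) (lam j)) ∧
  (∀ i j : Fin n, (i : ℕ) = 0 → (j : ℕ) = 1 → IntGE (-(lam i + lam j)) 0)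

/-- `D_st^λ`: the set of (normalized) `D`-standard tableaux with top row
`ℓ_i = λ_i - i + 3/2` (`1`-based `i`). -/
def DSt (n : ℕ) (lam : Fin n → ℂ) : Set (Tab ℂ) :=
  {T | DNorm n T ∧ IsDStandard n T ∧
    ∀ i : Fin n, T.u n ((i : ℕ) + 1) = lam i - ((i : ℕ) + 1) + 3 / 2}

/-- The type-`D` tableau obtained from a type-`C` tableau by deleting the entries
`ℓ'_{11}, …, ℓ'_{n1}`. -/
def CtoD (W : Tab ℂ) : Tab ℂ := ⟨W.u, fun k i => if i = 1 then 0 else W.p k i⟩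

/-- `𝔅(μ,λ)`: type-`C` tableaux whose left-most primed column is in `μ + ℤ^n` and whose
remaining part is a `D`-standard tableau with top row `λ + ρ_D + 1/2`. -/
def TabB (n : ℕ) (mu lam : Fin n → ℂ) : Set (Tab ℂ) :=
  {W | CNorm n W ∧ (∀ k : Fin n, IsInt (W.p ((k : ℕ) + 1) 1 - mu k)) ∧ CtoD W ∈ DSt n lam}

/-- Membership of a vector of `ℂ^n` in the root lattice `Q_C = {a ∈ ℤ^n | ∑ a_i ∈ 2ℤ}`. -/
def QCvec {n : ℕ} (v : Fin n → ℂ) : Prop :=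
  ∃ q : Fin n → ℤ, (2 ∣ ∑ i, q i) ∧ ∀ i, v i = (q i : ℂ)

/-! ### The symplectic Lie algebra `sp(2n, ℂ)` -/

/-- Index set `{1,…,n} × {±}` for rows/columns of `2n × 2n` matrices: `(k, true)` is the
positive index `k`, `(k, false)` is the negative index `-k`. -/
abbrev SpIdx (n : ℕ) := Fin n × Bool

/-- The sign of an index. -/
def sgnC {n : ℕ} (a : SpIdx n) : ℂ := if a.2 then 1 else -1

/-- `a ↦ -a` on indices. -/
def negIdx {n : ℕ} (a : SpIdx n) : SpIdx n := (a.1, !a.2)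

/-- `F_{ab} = E_{ab} - sgn(a)sgn(b) E_{-b,-a}`. -/
def Fmat (n : ℕ) (a b : SpIdx n) : Matrix (SpIdx n) (SpIdx n) ℂ :=
  Matrix.single a b 1 - Matrix.single (negIdx b) (negIdx a) (sgnC a * sgnC b)

attribute [local instance] LieRing.ofAssociativeRing

/-- `sp(2n, ℂ)`: the Lie subalgebra of `gl(2n, ℂ)` spanned by the `F_{ab}`. -/
def sp (n : ℕ) : LieSubalgebra ℂ (Matrix (SpIdx n) (SpIdx n) ℂ) :=
  LieSubalgebra.lieSpan ℂ _ (Set.range fun x : SpIdx n × SpIdx n => Fmat n x.1 x.2)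

/-- `F_{ab}` as an element of `sp(2n, ℂ)`. -/
def spF (n : ℕ) (a b : SpIdx n) : sp n :=
  ⟨Fmat n a b, LieSubalgebra.subset_lieSpan ⟨(a, b), rfl⟩⟩

/-- The basis vector of the free module on a set `S` of tableaux attached to `L`, with the
convention that `T(L) = 0` whenever `L ∉ S`. -/
def bvec {F : Type*} [Field F] (S : Set (Tab F)) (L : Tab F) : ↥S →₀ F :=
  if h : L ∈ S then Finsupp.single ⟨L, h⟩ 1 else 0

/-- The statement that a Lie algebra homomorphism `ρ : sp(2n,ℂ) → End(V)` acts on the basis `S`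
of tableaux by the Gelfand--Tsetlin formulas (with 1-based row index `k+1` for `k : Fin n`). -/
def GTact (n : ℕ) {F : Type*} [Field F] [Algebra ℂ F] (S : Set (Tab F))
    (ρ : sp n →ₗ⁅ℂ⁆ Module.End ℂ (↥S →₀ F)) : Prop :=
  ∀ L ∈ S,
    (∀ k : Fin n,
      ρ (spF n (k, true) (k, true)) (bvec S L) = wt ((k : ℕ) + 1) L • bvec S L ∧
      ρ (spF n (k, true) (k, false)) (bvec S L) =
        ∑ i ∈ Finset.Icc 1 ((k : ℕ) + 1),
          coA ((k : ℕ) + 1) i L • bvec S (L.addZ (deltaP ((k : ℕ) + 1) i)) ∧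
      ρ (spF n (k, false) (k, true)) (bvec S L) =
        ∑ i ∈ Finset.Icc 1 ((k : ℕ) + 1),
          coB ((k : ℕ) + 1) i L • bvec S (L.addZ (-deltaP ((k : ℕ) + 1) i))) ∧
    (∀ k : Fin n, 1 ≤ (k : ℕ) →
      ρ (spF n (⟨(k : ℕ) - 1, lt_of_le_of_lt (Nat.sub_le _ _) k.isLt⟩, true) (k, false))
          (bvec S L) =
        (∑ i ∈ Finset.Icc 1 (k : ℕ),
          coC ((k : ℕ) + 1) i L • bvec S (L.addZ (-deltaU (k : ℕ) i))) +
        ∑ i ∈ Finset.Icc 1 ((k : ℕ) + 1), ∑ j ∈ Finset.Icc 1 (k : ℕ), ∑ m ∈ Finset.Icc 1 (k : ℕ),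
          coD ((k : ℕ) + 1) i j m L •
            bvec S (L.addZ (deltaP ((k : ℕ) + 1) i + deltaU (k : ℕ) j + deltaP (k : ℕ) m)))

/-- The set of tableaux `{T(L + Z)}` with `Z` an integer tableau vanishing on the unprimed
top row. -/
def orbitB {F : Type*} [Field F] (n : ℕ) (L : Tab F) : Set (Tab F) :=
  {M | ∃ Z : Tab ℤ, (∀ i, Z.u n i = 0) ∧ M = L.addZ Z}

/-- The tableau `T(W^{μ,λ})`. -/
def Wup (n : ℕ) (mu lam : Fin n → ℂ) : Tab ℂ :=
  ⟨fun k i => if h : 1 ≤ i ∧ i ≤ k ∧ k ≤ n then lam ⟨i - 1, by omega⟩ - (i : ℂ) + 3 / 2 else 0,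
   fun k i => if h : 1 ≤ i ∧ i ≤ k ∧ k ≤ n then
      (if i = 1 then mu ⟨k - 1, by omega⟩ else lam ⟨i - 1, by omega⟩ - (i : ℂ) + 3 / 2) else 0⟩

/-- The tableau `T(W_{μ,λ})`. -/
def Wlow (n : ℕ) (mu lam : Fin n → ℂ) : Tab ℂ :=
  ⟨fun k i => if h : 1 ≤ i ∧ i ≤ k ∧ k ≤ n then
      (if i = 1 then
        (if (n - k) % 2 = 0 then lam ⟨0, by omega⟩ + 1 / 2 else 1 - (lam ⟨0, by omega⟩ + 1 / 2))
       else lam ⟨i - 1, by omega⟩ - (i : ℂ) + 3 / 2) else 0,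
   fun k i => if h : 1 ≤ i ∧ i ≤ k ∧ k ≤ n then
      (if i = 1 then mu ⟨k - 1, by omega⟩ else lam ⟨i - 1, by omega⟩ - (i : ℂ) + 3 / 2) else 0⟩

/-- `𝔅_k^+(μ,λ)` for a `1`-based row index `k`. -/
def BkPlus (n : ℕ) (mu lam : Fin n → ℂ) (k : ℕ) : Set (Tab ℂ) :=
  {W | W ∈ TabB n mu lam ∧ IntGE (W.p k 1) (1 / 2)}

end GTpaper

/-! After the shift `L ↦ L + δ^{(ki)'} + δ^{(k-1,1)}`, the hypotheses `ℓ_{ka} = ℓ'_{ka}` (`a ≥ 2`)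
and `ℓ'_{k1} = 1/2` make almost all factors of `B_{ki}` cancel against `A_{ki}`, leaving
`4 (ℓ'_{ki}² - ℓ_{k-1,1}²) P(ℓ'_{ki})` with `P(t) = ∏_{1<a<k} (ℓ'_{ka} - 1 - t)`. The factor
`ℓ'_{ki}² - ℓ_{k-1,1}²` completes the product over `a ≠ i` in `D_{ki1m}`, so the `i`-th summand is
`A_{ki}(L) P(ℓ'_{ki})` times a constant independent of `i`. The sum is therefore a divided
difference of order `k - 1` of the polynomial `P` of degree `k - 2`, which vanishes. -/

namespace Lagrange

open Polynomial Finset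

theorem sum_nodalWeight_mul_eval_eq_zero {F ι : Type*} [Field F] [DecidableEq ι]
    {s : Finset ι} {v : ι → F} (hvs : Set.InjOn v s) {P : F[X]}
    (hP : P.degree < ↑(#s - 1)) :
    ∑ i ∈ s, nodalWeight s v i * P.eval (v i) = 0 := by
  have hP' : P.degree < #s := hP.trans_le (by exact_mod_cast Nat.sub_le _ _)
  rw [← coeff_eq_zero_of_degree_lt hP, coeff_eq_sum hvs hP']
  simp only [nodalWeight, prod_inv_distrib, div_eq_mul_inv, mul_comm]

end Lagrange

namespace GTpaper

open Finset

@[simp] lemma Tab.add_u (a b : Tab ℤ) (k i : ℕ) : (a + b).u k i = a.u k i + b.u k i := rfl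
@[simp] lemma Tab.add_p (a b : Tab ℤ) (k i : ℕ) : (a + b).p k i = a.p k i + b.p k i := rfl

@[simp] lemma Tab.addZ_u {R : Type*} [Ring R] (L : Tab R) (Z : Tab ℤ) (k i : ℕ) :
    (L.addZ Z).u k i = L.u k i + Z.u k i := rfl

@[simp] lemma Tab.addZ_p {R : Type*} [Ring R] (L : Tab R) (Z : Tab ℤ) (k i : ℕ) :
    (L.addZ Z).p k i = L.p k i + Z.p k i := rfl

@[simp] lemma deltaU_u (k i a b : ℕ) : (deltaU k i).u a b = if a = k ∧ b = i then 1 else 0 := rfl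
@[simp] lemma deltaU_p (k i a b : ℕ) : (deltaU k i).p a b = 0 := rfl
@[simp] lemma deltaP_u (k i a b : ℕ) : (deltaP k i).u a b = 0 := rfl
@[simp] lemma deltaP_p (k i a b : ℕ) : (deltaP k i).p a b = if a = k ∧ b = i then 1 else 0 := rfl

section

variable {F : Type*} [Field F]

lemma prod_erase_inv_mul_prod_Ioc_mul_eq_two [CharZero F] (x : ℕ → F) {k i : ℕ}
    (hx1 : x 1 = 1 / 2) (hi : i ∈ Icc 1 k)
    (hden : ∀ a ∈ (Icc 1 k).erase i, x a - (x i + 1) ≠ 0) :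
    (∏ a ∈ (Icc 1 k).erase i, (x a - (x i + 1)))⁻¹ * (∏ a ∈ Ioc 1 k, (x a - (x i + 1))) *
      (2 * (x i + 1) - 1) = 2 := by
  obtain ⟨hi1, hik⟩ := mem_Icc.mp hi
  rcases hi1.eq_or_lt with rfl | hi2
  · rw [Icc_erase_left] at hden ⊢
    rw [inv_mul_cancel₀ (prod_ne_zero_iff.mpr hden), hx1]
    ring
  · have hiIoc : i ∈ Ioc 1 k := mem_Ioc.mpr ⟨hi2, hik⟩
    have herase : (Icc 1 k).erase i = insert 1 ((Ioc 1 k).erase i) := by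
      ext a; simp only [mem_erase, mem_Icc, mem_insert, mem_Ioc]; omega
    have h1 : 2 * x i + 1 ≠ 0 := by
      intro h
      refine hden 1 (by rw [herase]; exact mem_insert_self _ _) ?_
      linear_combination hx1 - h / 2
    have hR : ∏ a ∈ (Ioc 1 k).erase i, (x a - (x i + 1)) ≠ 0 :=
      prod_ne_zero_iff.mpr fun a ha => hden a (by rw [herase]; exact mem_insert_of_mem ha)
    rw [← mul_prod_erase _ _ hiIoc, herase, prod_insert (by simp), hx1,
      show (1 : F) / 2 - (x i + 1) = -(2 * x i + 1) / 2 by ring]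
    field_simp
    ring

lemma coB_addZ_deltaP_add_deltaU [CharZero F] {k : ℕ} (hk2 : 2 ≤ k) {L : Tab F} (h1 : L.p k 1 = 1 / 2)
    (h2 : L.p k k = L.u k k)
    (h3 : ∀ i, 2 ≤ i → i ≤ k - 1 → L.u k i = L.p k i ∧ L.p k i = L.u (k - 1) i)
    (h4 : L.u k 1 + L.u (k - 1) 1 = 1) {i : ℕ} (hi : i ∈ Icc 1 k)
    (hden : ∀ a ∈ (Icc 1 k).erase i, L.p k a - (L.p k i + 1) ≠ 0) :
    coB k i (L.addZ (deltaP k i + deltaU (k - 1) 1)) =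
      4 * (L.p k i ^ 2 - L.u (k - 1) 1 ^ 2) * ∏ a ∈ Ioc 1 (k - 1), (L.p k a - (L.p k i + 1)) := by
  set L' := L.addZ (deltaP k i + deltaU (k - 1) 1)
  have hp : L'.p k i = L.p k i + 1 := by simp [L']
  have hu : ∀ a, L'.u k a = L.u k a := by simp [L', show k ≠ k - 1 by omega]
  have hu' : ∀ a, L'.u (k - 1) a = L.u (k - 1) a + if a = 1 then 1 else 0 := by simp [L']
  have hA : coA k i L' = (∏ a ∈ (Icc 1 k).erase i, (L.p k a - (L.p k i + 1)))⁻¹ := by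
    rw [coA, ← prod_inv_distrib, hp]
    exact prod_congr rfl fun a ha => by simp [L', (mem_erase.mp ha).1]
  have hrow : ∏ a ∈ Icc 1 k, (L'.u k a - L'.p k i) =
      (-L.u (k - 1) 1 - L.p k i) * ∏ a ∈ Ioc 1 k, (L.p k a - (L.p k i + 1)) := by
    rw [← mul_prod_erase _ _ (left_mem_Icc.mpr (by omega)), Icc_erase_left, hp, hu]
    congr 1
    · linear_combination h4
    · refine prod_congr rfl fun a ha => ?_
      obtain ⟨ha1, hak⟩ := mem_Ioc.mp ha
      rcases hak.eq_or_lt with rfl | hak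
      · rw [hu, h2]
      · rw [hu, (h3 a ha1 (by omega)).1]
  have hrow' : ∏ a ∈ Icc 1 (k - 1), (L'.u (k - 1) a - L'.p k i) =
      (L.u (k - 1) 1 - L.p k i) * ∏ a ∈ Ioc 1 (k - 1), (L.p k a - (L.p k i + 1)) := by
    rw [← mul_prod_erase _ _ (left_mem_Icc.mpr (by omega)), Icc_erase_left, hp, hu']
    congr 1
    · rw [if_pos rfl]; ring
    · refine prod_congr rfl fun a ha => ?_
      obtain ⟨ha1, hak⟩ := mem_Ioc.mp ha
      rw [hu', if_neg ha1.ne', add_zero, (h3 a ha1 hak).2]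
  have key := prod_erase_inv_mul_prod_Ioc_mul_eq_two (L.p k) h1 hi hden
  rw [coB, hA, hrow, hrow', hp]
  linear_combination (2 * (-L.u (k - 1) 1 - L.p k i) * (L.u (k - 1) 1 - L.p k i) *
    ∏ a ∈ Ioc 1 (k - 1), (L.p k a - (L.p k i + 1))) * key

lemma coD_mul_sq_sub_sq {k i : ℕ} (j m : ℕ) (L : Tab F) (hi : i ∈ Icc 1 k) :
    coD k i j m L * (L.p k i ^ 2 - L.u (k - 1) j ^ 2) =
      -(coA k i L * (coA (k - 1) m L * coC k j L *
        (∏ a ∈ Icc 1 k, (L.u (k - 1) j ^ 2 - L.p k a ^ 2)) *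
        ∏ a ∈ (Icc 1 (k - 1)).erase m, (L.u (k - 1) j ^ 2 - L.p (k - 1) a ^ 2))) := by
  rw [coD, ← mul_prod_erase _ _ hi]
  ring

lemma coD_mul_coB_addZ_deltaP_add_deltaU [CharZero F] {k : ℕ} (hk2 : 2 ≤ k) (m : ℕ) {L : Tab F}
    (h1 : L.p k 1 = 1 / 2) (h2 : L.p k k = L.u k k)
    (h3 : ∀ i, 2 ≤ i → i ≤ k - 1 → L.u k i = L.p k i ∧ L.p k i = L.u (k - 1) i)
    (h4 : L.u k 1 + L.u (k - 1) 1 = 1) {i : ℕ} (hi : i ∈ Icc 1 k)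
    (hden : ∀ a ∈ (Icc 1 k).erase i, L.p k a - (L.p k i + 1) ≠ 0) :
    coD k i 1 m L * coB k i (L.addZ (deltaP k i + deltaU (k - 1) 1)) =
      -4 * (coA (k - 1) m L * coC k 1 L * (∏ a ∈ Icc 1 k, (L.u (k - 1) 1 ^ 2 - L.p k a ^ 2)) *
        ∏ a ∈ (Icc 1 (k - 1)).erase m, (L.u (k - 1) 1 ^ 2 - L.p (k - 1) a ^ 2)) *
      (coA k i L * ∏ a ∈ Ioc 1 (k - 1), (L.p k a - (L.p k i + 1))) := by
  rw [coB_addZ_deltaP_add_deltaU hk2 h1 h2 h3 h4 hi hden]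
  linear_combination (4 * ∏ a ∈ Ioc 1 (k - 1), (L.p k a - (L.p k i + 1))) *
    coD_mul_sq_sub_sq 1 m L hi

open Polynomial in
lemma sum_coA_mul_prod_Ioc_eq_zero {k : ℕ} (hk2 : 2 ≤ k) {L : Tab F}
    (hinj : Set.InjOn (L.p k) (Icc 1 k)) :
    ∑ i ∈ Icc 1 k, coA k i L * ∏ a ∈ Ioc 1 (k - 1), (L.p k a - (L.p k i + 1)) = 0 := by
  -- Negating the nodes turns `nodalWeight`'s factors `v i - v a` into `coA`'s `ℓ'_{ka} - ℓ'_{ki}`.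
  set Q : F[X] := Lagrange.nodal (Ioc 1 (k - 1)) fun a => 1 - L.p k a
  have hdeg : Q.degree < ↑(#(Icc 1 k) - 1) := by
    rw [Lagrange.degree_nodal, Nat.card_Ioc, Nat.card_Icc]
    exact_mod_cast (by omega : k - 1 - 1 < k + 1 - 1 - 1)
  have hinj' : Set.InjOn (fun a => -L.p k a) (Icc 1 k) := fun a ha b hb hab =>
    hinj ha hb (neg_inj.mp hab)
  have hterm : ∀ i ∈ Icc 1 k, coA k i L * ∏ a ∈ Ioc 1 (k - 1), (L.p k a - (L.p k i + 1)) =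
      Lagrange.nodalWeight (Icc 1 k) (fun a => -L.p k a) i * Q.eval (-L.p k i) := fun i _ => by
    rw [Lagrange.eval_nodal]
    simp only [Lagrange.nodalWeight, coA, neg_sub_neg]
    exact congrArg _ (prod_congr rfl fun _ _ => by ring)
  rw [sum_congr rfl hterm, Lagrange.sum_nodalWeight_mul_eval_eq_zero hinj' hdeg]

end

theorem more_identities_general (k : ℕ) (hk2 : 2 ≤ k)
    (L : Tab ℂ)
    (h1 : L.p k 1 = 1 / 2) (h2 : L.p k k = L.u k k)
    (h3 : ∀ i, 2 ≤ i → i ≤ k - 1 → L.u k i = L.p k i ∧ L.p k i = L.u (k - 1) i)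
    (h4 : L.u k 1 + L.u (k - 1) 1 = 1)
    (m : ℕ)
    (hden1 : ∀ i a, 1 ≤ i → i ≤ k → 1 ≤ a → a ≤ k → a ≠ i → L.p k a - L.p k i ≠ 0)
    (hden2 : ∀ i a, 1 ≤ i → i ≤ k → 1 ≤ a → a ≤ k → a ≠ i → L.p k a - (L.p k i + 1) ≠ 0) :
    ∑ i ∈ Finset.Icc 1 k,
      coD k i 1 m L * coB k i (L.addZ (deltaP k i + deltaU (k - 1) 1)) = 0 := by
  have hinj : Set.InjOn (L.p k) (Icc 1 k) := fun a ha b hb hab => by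
    by_contra hne
    rw [coe_Icc, Set.mem_Icc] at ha hb
    exact hden1 b a hb.1 hb.2 ha.1 ha.2 hne (by rw [hab, sub_self])
  have hterm := fun i (hi : i ∈ Icc 1 k) => coD_mul_coB_addZ_deltaP_add_deltaU hk2 m h1 h2 h3 h4 hi
    fun a ha => by
      obtain ⟨hai, ha⟩ := mem_erase.mp ha
      exact hden2 i a (mem_Icc.mp hi).1 (mem_Icc.mp hi).2 (mem_Icc.mp ha).1 (mem_Icc.mp ha).2 hai
  rw [sum_congr rfl hterm, ← mul_sum, sum_coA_mul_prod_Ioc_eq_zero hk2 hinj, mul_zero]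

/-- Lemma "more identities": on a tableau `T(L) ∈ 𝔅(μ,λ)` with
`ℓ'_{k1} = 1/2`, `ℓ'_{kk} = ℓ_{kk}`, `ℓ_{ki} = ℓ'_{ki} = ℓ_{k-1,i}` for `2 ≤ i ≤ k-1`, and
`ℓ_{k1} + ℓ_{k-1,1} = 1`, one has
`∑_{i=1}^{k} D_{ki1m}(L) B_{ki}(L + δ^{(ki)'} + δ^{(k-1,1)}) = 0` for every `m ∈ [k-1]`,
provided all the denominators occurring are nonzero. -/
theorem more_identities (n : ℕ) (hn : 2 ≤ n) (mu lam : Fin n → ℂ)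
    (hmu : ∀ i, ¬IsInt (mu i)) (hlam : ∀ i, IsHalfInt (lam i)) (hdom : SODominant lam)
    (k : ℕ) (hk2 : 2 ≤ k) (hk : k ≤ n)
    (L : Tab ℂ) (hL : L ∈ TabB n mu lam)
    (h1 : L.p k 1 = 1 / 2) (h2 : L.p k k = L.u k k)
    (h3 : ∀ i, 2 ≤ i → i ≤ k - 1 → L.u k i = L.p k i ∧ L.p k i = L.u (k - 1) i)
    (h4 : L.u k 1 + L.u (k - 1) 1 = 1)
    (m : ℕ) (hm1 : 1 ≤ m) (hm : m ≤ k - 1)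
    (hden1 : ∀ i a, 1 ≤ i → i ≤ k → 1 ≤ a → a ≤ k → a ≠ i → L.p k a - L.p k i ≠ 0)
    (hden2 : ∀ i a, 1 ≤ i → i ≤ k → 1 ≤ a → a ≤ k → a ≠ i → L.p k a - (L.p k i + 1) ≠ 0)
    (hden3 : ∀ a, 1 ≤ a → a ≤ k - 1 → a ≠ m → L.p (k - 1) a - L.p (k - 1) m ≠ 0)
    (hden4 : 2 * L.u (k - 1) 1 - 1 ≠ 0)
    (hden5 : ∀ a, 2 ≤ a → a ≤ k - 1 →
      L.u (k - 1) 1 - L.u (k - 1) a ≠ 0 ∧ L.u (k - 1) 1 + L.u (k - 1) a - 1 ≠ 0) :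
    ∑ i ∈ Finset.Icc 1 k,
      coD k i 1 m L * coB k i (L.addZ (deltaP k i + deltaU (k - 1) 1)) = 0 :=
  more_identities_general k hk2 L h1 h2 h3 h4 m hden1 hden2

end GTpaper
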